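/- arXiv:0711.2490 — 11 statements merged into one kernel-verified Lean document; each statement's English description precedes it below -/
import Mathlib

section
/- The symmetric maximum is associative on every triple whose maximum is not the negation of its minimum: for all a, b, c ∈ L, if max(a, b, c) ≠ −min(a, b, c), then (a ⊻ b) ⊻ c = a ⊻ (b ⊻ c). -/
/-- The symmetric maximum on a linear order `L` with negation `neg` and
distinguished element `zero`; `max x (neg x)` plays the role of `|x|`. -/
def symMax {L : Type*} [LinearOrder L] (neg : L → L) (zero : L) (a b : L) : L :=
  if b = neg a then zero
  else if max (max a (neg a)) (max b (neg b)) = neg a ∨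
          max (max a (neg a)) (max b (neg b)) = neg b then
    neg (max (max a (neg a)) (max b (neg b)))
  else max (max a (neg a)) (max b (neg b))

/-- The symmetric minimum on a linear order `L` with negation `neg` and
distinguished element `zero`. -/
def symMin {L : Type*} [LinearOrder L] (neg : L → L) (zero : L) (a b : L) : L :=
  if (a < zero ∧ zero < b) ∨ (b < zero ∧ zero < a) then
    neg (min (max a (neg a)) (max b (neg b)))
  else min (max a (neg a)) (max b (neg b))

/-- The splitting-rule evaluation `⟨⊻ s⟩₋⁺` of a finite multiset `s`:
the symmetric maximum of the max of the nonnegative terms (`zero` if none)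
and the min of the negative terms (`zero` if none). -/
def splitEval {L : Type*} [LinearOrder L] (neg : L → L) (zero : L) (s : Multiset L) : L :=
  symMax neg zero ((s.filter (fun x => zero ≤ x)).fold max zero)
    ((s.filter (fun x => x < zero)).fold min zero)

/-! Away from opposite pairs, `x ⊻ y` is the argument of larger absolute value (the right one
on ties), and this "right-biased argmax" is associative. The hypothesis `max ≠ -min` says that
whenever two entries of the triple are opposite, the third is strictly larger in absolute value;
the cancelled pair then gives `0`, a neutral element, and the third entry wins on both sides. -/

def symAbs {L : Type*} [LinearOrder L] (neg : L → L) (x : L) : L :=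
  max x (neg x)

section SymMax

variable {L : Type*} [LinearOrder L] {neg : L → L} {zero : L}

theorem symAbs_neg (hinv : Function.Involutive neg) (x : L) :
    symAbs neg (neg x) = symAbs neg x := by
  rw [symAbs, symAbs, hinv, max_comm]

theorem neg_symAbs (hanti : Antitone neg) (x : L) :
    neg (symAbs neg x) = min (neg x) (neg (neg x)) :=
  hanti.map_max

theorem symAbs_zero (hzero : neg zero = zero) : symAbs neg zero = zero := by
  rw [symAbs, hzero, max_self]

theorem zero_le_symAbs (hanti : Antitone neg) (hzero : neg zero = zero) (x : L) :
    zero ≤ symAbs neg x := by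
  rcases le_total zero x with hx | hx
  · exact le_max_of_le_left hx
  · exact le_max_of_le_right (hzero ▸ hanti hx)

theorem eq_zero_of_symAbs_le (hinv : Function.Involutive neg) (hanti : Antitone neg)
    (hzero : neg zero = zero) {x : L} (hx : symAbs neg x ≤ zero) : x = zero := by
  refine le_antisymm (le_of_max_le_left hx) ?_
  simpa only [hinv x, hzero] using hanti (le_of_max_le_right hx)

theorem ne_neg_of_symAbs_ne (hinv : Function.Involutive neg) {a b : L}
    (h : symAbs neg a ≠ symAbs neg b) : b ≠ neg a := by
  rintro rfl
  exact h (symAbs_neg hinv a).symm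

theorem ite_symAbs_eq_neg (hinv : Function.Involutive neg) (x : L) :
    (if symAbs neg x = neg x then neg (symAbs neg x) else symAbs neg x) = x := by
  split_ifs with hx
  · rw [hx, hinv]
  · exact (max_choice x (neg x)).resolve_right hx

theorem symMax_of_eq_neg {a b : L} (hab : b = neg a) : symMax neg zero a b = zero :=
  if_pos hab

theorem symMax_of_ne_neg (hinv : Function.Involutive neg) {a b : L} (hab : b ≠ neg a) :
    symMax neg zero a b = if symAbs neg a ≤ symAbs neg b then b else a := by
  rw [symMax, if_neg hab, ← symAbs, ← symAbs]
  by_cases hle : symAbs neg a ≤ symAbs neg b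
  · have hb : symAbs neg b = neg a → symAbs neg b = neg b := fun h =>
      (max_choice b (neg b)).resolve_left fun hb => hab (hb ▸ h)
    rw [if_pos hle, max_eq_right hle, if_congr (or_iff_right_of_imp hb) rfl rfl,
      ite_symAbs_eq_neg hinv]
  · have hlt : neg b < symAbs neg a := (le_max_right b (neg b)).trans_lt (not_le.mp hle)
    rw [if_neg hle, max_eq_left (not_le.mp hle).le,
      if_congr (or_iff_left_of_imp fun h => absurd h hlt.ne') rfl rfl, ite_symAbs_eq_neg hinv]

theorem symMax_zero_left (hinv : Function.Involutive neg) (hanti : Antitone neg)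
    (hzero : neg zero = zero) (x : L) : symMax neg zero zero x = x := by
  by_cases hx : x = neg zero
  · rw [symMax, if_pos hx, hx, hzero]
  · rw [symMax_of_ne_neg hinv hx, symAbs_zero hzero, if_pos (zero_le_symAbs hanti hzero x)]

theorem symMax_eq_right_of_symAbs_lt (hinv : Function.Involutive neg) {a b : L}
    (h : symAbs neg a < symAbs neg b) : symMax neg zero a b = b := by
  rw [symMax_of_ne_neg hinv (ne_neg_of_symAbs_ne hinv h.ne), if_pos h.le]

theorem symMax_eq_left_of_symAbs_lt (hinv : Function.Involutive neg) {a b : L}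
    (h : symAbs neg b < symAbs neg a) : symMax neg zero a b = a := by
  rw [symMax_of_ne_neg hinv (ne_neg_of_symAbs_ne hinv h.ne'), if_neg h.not_ge]

theorem symMax_zero_right (hinv : Function.Involutive neg) (hanti : Antitone neg)
    (hzero : neg zero = zero) (x : L) : symMax neg zero x zero = x := by
  by_cases hx : zero = neg x
  · rw [symMax_of_eq_neg hx, ← hinv x, ← hx, hzero]
  · rw [symMax_of_ne_neg hinv hx, symAbs_zero hzero,
      if_neg fun hle => hx (by rw [eq_zero_of_symAbs_le hinv hanti hzero hle, hzero])]

theorem symAbs_lt_of_max_ne_neg_min (hinv : Function.Involutive neg) (hanti : Antitone neg)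
    {u v w : L} (h : max u (max v w) ≠ neg (min u (min v w))) (hv : v = neg u) :
    symAbs neg u < symAbs neg w := by
  subst hv
  refine lt_of_not_ge fun hw => h ?_
  have hw_le : w ≤ symAbs neg u := (le_max_left w (neg w)).trans hw
  have hle_w : neg (symAbs neg u) ≤ w := hinv w ▸ hanti ((le_max_right w (neg w)).trans hw)
  have hmin : min u (neg u) = neg (symAbs neg u) := by rw [neg_symAbs hanti, hinv, min_comm]
  rw [← max_assoc, ← min_assoc, ← symAbs, max_eq_left hw_le, hmin, min_eq_left hle_w, hinv]

theorem symMax_assoc_of_eq_neg_left (hinv : Function.Involutive neg) (hanti : Antitone neg)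
    (hzero : neg zero = zero) {a b c : L} (hab : b = neg a) (hac : symAbs neg a < symAbs neg c) :
    symMax neg zero (symMax neg zero a b) c = symMax neg zero a (symMax neg zero b c) := by
  have hbc : symAbs neg b < symAbs neg c := by rwa [hab, symAbs_neg hinv]
  rw [symMax_of_eq_neg hab, symMax_zero_left hinv hanti hzero,
    symMax_eq_right_of_symAbs_lt hinv hbc, symMax_eq_right_of_symAbs_lt hinv hac]

theorem symMax_assoc_of_eq_neg_right (hinv : Function.Involutive neg) (hanti : Antitone neg)
    (hzero : neg zero = zero) {a b c : L} (hbc : c = neg b) (hba : symAbs neg b < symAbs neg a) :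
    symMax neg zero (symMax neg zero a b) c = symMax neg zero a (symMax neg zero b c) := by
  have hca : symAbs neg c < symAbs neg a := by rwa [hbc, symAbs_neg hinv]
  rw [symMax_eq_left_of_symAbs_lt hinv hba, symMax_eq_left_of_symAbs_lt hinv hca,
    symMax_of_eq_neg hbc, symMax_zero_right hinv hanti hzero]

theorem symMax_assoc_of_ne_neg (hinv : Function.Involutive neg) {a b c : L} (hab : b ≠ neg a)
    (hbc : c ≠ neg b) (hac : c = neg a → symAbs neg a < symAbs neg b) :
    symMax neg zero (symMax neg zero a b) c = symMax neg zero a (symMax neg zero b c) := by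
  rw [symMax_of_ne_neg hinv hab, symMax_of_ne_neg hinv hbc]
  split_ifs with hab_le hbc_le hbc_le
  · have hac : c ≠ neg a := fun hca =>
      ((hac hca).trans_le hbc_le).ne (by rw [hca, symAbs_neg hinv])
    rw [symMax_of_ne_neg hinv hbc, if_pos hbc_le, symMax_of_ne_neg hinv hac,
      if_pos (hab_le.trans hbc_le)]
  · rw [symMax_eq_left_of_symAbs_lt hinv (not_le.mp hbc_le), symMax_of_ne_neg hinv hab,
      if_pos hab_le]
  · rfl
  · rw [symMax_eq_left_of_symAbs_lt hinv ((not_le.mp hbc_le).trans (not_le.mp hab_le)),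
      symMax_eq_left_of_symAbs_lt hinv (not_le.mp hab_le)]

end SymMax

/-- the symmetric maximum is associative on every triple whose
maximum is not the negation of its minimum. -/
theorem symMax_assoc_of_max_ne_neg_min {L : Type*} [LinearOrder L]
    (neg : L → L) (zero : L)
    (hinv : ∀ x, neg (neg x) = x)
    (hord : ∀ x y, x ≤ y ↔ neg y ≤ neg x)
    (hzero : neg zero = zero)
    (a b c : L) (h : max a (max b c) ≠ neg (min a (min b c))) :
    symMax neg zero (symMax neg zero a b) c = symMax neg zero a (symMax neg zero b c) := by
  have hanti : Antitone neg := fun x y hxy => (hord x y).mp hxy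
  have hab_lt : b = neg a → symAbs neg a < symAbs neg c :=
    symAbs_lt_of_max_ne_neg_min hinv hanti h
  have hbc_lt : c = neg b → symAbs neg b < symAbs neg a :=
    symAbs_lt_of_max_ne_neg_min hinv hanti
      (by rwa [max_left_comm, max_comm a, min_left_comm, min_comm a] at h)
  have hac_lt : c = neg a → symAbs neg a < symAbs neg b :=
    symAbs_lt_of_max_ne_neg_min hinv hanti (by rwa [max_comm b, min_comm b] at h)
  obtain hab | hab := eq_or_ne b (neg a)
  · exact symMax_assoc_of_eq_neg_left hinv hanti hzero hab (hab_lt hab)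
  obtain hbc | hbc := eq_or_ne c (neg b)
  · exact symMax_assoc_of_eq_neg_right hinv hanti hzero hbc (hbc_lt hbc)
  exact symMax_assoc_of_ne_neg hinv hab hbc hac_lt
end

section
/- The symmetric minimum distributes over the symmetric maximum separately on the nonnegative and the nonpositive part: if a, b, c ∈ L are all ≥ 0, or all ≤ 0, then a ⊼ (b ⊻ c) = (a ⊼ b) ⊻ (a ⊼ c) and (b ⊻ c) ⊼ a = (b ⊼ a) ⊻ (c ⊼ a). -/
/-!
On the nonnegative part `|x| = x`, so `⊻` is `max` and `⊼` is `min`, and the identity is the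
distributivity of `min` over `max`. On the nonpositive part `|x| = -x`, so `⊼` becomes `min` of the
negations while `⊻` is `-(max (-b) (-c))`; after cancelling the double negation this is again
distributivity of `min` over `max`, now for `-a, -b, -c ≥ 0`. The second identity follows from
the commutativity of `⊼`.
-/

namespace SymMaxMin

variable {L : Type*} [LinearOrder L] {neg : L → L} {zero : L} {a b c x : L}

lemma neg_nonpos_of_nonneg (hord : ∀ x y, x ≤ y ↔ neg y ≤ neg x) (hzero : neg zero = zero)
    (hx : zero ≤ x) : neg x ≤ zero :=
  hzero ▸ (hord zero x).1 hx

lemma nonneg_neg_of_nonpos (hord : ∀ x y, x ≤ y ↔ neg y ≤ neg x) (hzero : neg zero = zero)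
    (hx : x ≤ zero) : zero ≤ neg x :=
  hzero ▸ (hord x zero).1 hx

lemma max_self_neg_of_nonneg (hord : ∀ x y, x ≤ y ↔ neg y ≤ neg x) (hzero : neg zero = zero)
    (hx : zero ≤ x) : max x (neg x) = x :=
  max_eq_left ((neg_nonpos_of_nonneg hord hzero hx).trans hx)

lemma max_self_neg_of_nonpos (hord : ∀ x y, x ≤ y ↔ neg y ≤ neg x) (hzero : neg zero = zero)
    (hx : x ≤ zero) : max x (neg x) = neg x :=
  max_eq_right (hx.trans (nonneg_neg_of_nonpos hord hzero hx))

lemma symMax_of_nonneg (hord : ∀ x y, x ≤ y ↔ neg y ≤ neg x) (hzero : neg zero = zero)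
    (hb : zero ≤ b) (hc : zero ≤ c) : symMax neg zero b c = max b c := by
  have hnb := neg_nonpos_of_nonneg hord hzero hb
  have hnc := neg_nonpos_of_nonneg hord hzero hc
  have both_zero (h : max b c ≤ zero) : b = zero ∧ c = zero :=
    ⟨le_antisymm ((le_max_left b c).trans h) hb, le_antisymm ((le_max_right b c).trans h) hc⟩
  unfold symMax
  rw [max_self_neg_of_nonneg hord hzero hb, max_self_neg_of_nonneg hord hzero hc]
  split_ifs with hcb hM
  · have hb0 : b = zero := le_antisymm ((hord b zero).2 (by rwa [hzero, ← hcb])) hb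
    rw [hcb, hb0, hzero, max_self]
  · obtain ⟨rfl, rfl⟩ := both_zero (hM.elim (· ▸ hnb) (· ▸ hnc))
    exact absurd hzero.symm hcb
  · rfl

lemma symMax_of_nonpos (hord : ∀ x y, x ≤ y ↔ neg y ≤ neg x) (hzero : neg zero = zero)
    (hb : b ≤ zero) (hc : c ≤ zero) : symMax neg zero b c = neg (max (neg b) (neg c)) := by
  unfold symMax
  rw [max_self_neg_of_nonpos hord hzero hb, max_self_neg_of_nonpos hord hzero hc]
  split_ifs with hcb hM
  · have hc0 : c = zero := le_antisymm hc (hcb ▸ nonneg_neg_of_nonpos hord hzero hb)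
    have hb0 : b = zero := le_antisymm hb ((hord zero b).2 (by rw [← hcb, hc0, hzero]))
    rw [hb0, hc0, max_self, hzero, hzero]
  · rfl
  · exact absurd (max_choice (neg b) (neg c)) hM

lemma symMin_of_nonneg (hord : ∀ x y, x ≤ y ↔ neg y ≤ neg x) (hzero : neg zero = zero)
    (ha : zero ≤ a) (hb : zero ≤ b) : symMin neg zero a b = min a b := by
  unfold symMin
  rw [if_neg (by rintro (⟨h, -⟩ | ⟨h, -⟩) <;> order),
    max_self_neg_of_nonneg hord hzero ha, max_self_neg_of_nonneg hord hzero hb]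

lemma symMin_of_nonpos (hord : ∀ x y, x ≤ y ↔ neg y ≤ neg x) (hzero : neg zero = zero)
    (ha : a ≤ zero) (hb : b ≤ zero) : symMin neg zero a b = min (neg a) (neg b) := by
  unfold symMin
  rw [if_neg (by rintro (⟨-, h⟩ | ⟨-, h⟩) <;> order),
    max_self_neg_of_nonpos hord hzero ha, max_self_neg_of_nonpos hord hzero hb]

lemma symMin_comm : symMin neg zero a b = symMin neg zero b a := by
  unfold symMin
  rw [min_comm (max a (neg a))]
  exact if_congr or_comm rfl rfl

lemma symMin_symMax_of_nonneg (hord : ∀ x y, x ≤ y ↔ neg y ≤ neg x) (hzero : neg zero = zero)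
    (ha : zero ≤ a) (hb : zero ≤ b) (hc : zero ≤ c) :
    symMin neg zero a (symMax neg zero b c) =
      symMax neg zero (symMin neg zero a b) (symMin neg zero a c) := by
  rw [symMax_of_nonneg hord hzero hb hc, symMin_of_nonneg hord hzero ha (le_max_of_le_left hb),
    symMin_of_nonneg hord hzero ha hb, symMin_of_nonneg hord hzero ha hc,
    symMax_of_nonneg hord hzero (le_min ha hb) (le_min ha hc), min_max_distrib_left]

lemma symMin_symMax_of_nonpos (hinv : ∀ x, neg (neg x) = x)
    (hord : ∀ x y, x ≤ y ↔ neg y ≤ neg x) (hzero : neg zero = zero)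
    (ha : a ≤ zero) (hb : b ≤ zero) (hc : c ≤ zero) :
    symMin neg zero a (symMax neg zero b c) =
      symMax neg zero (symMin neg zero a b) (symMin neg zero a c) := by
  have hna := nonneg_neg_of_nonpos hord hzero ha
  have hnb := nonneg_neg_of_nonpos hord hzero hb
  have hnc := nonneg_neg_of_nonpos hord hzero hc
  have hbc : neg (max (neg b) (neg c)) ≤ zero :=
    neg_nonpos_of_nonneg hord hzero (le_max_of_le_left hnb)
  rw [symMax_of_nonpos hord hzero hb hc, symMin_of_nonpos hord hzero ha hbc, hinv,
    symMin_of_nonpos hord hzero ha hb, symMin_of_nonpos hord hzero ha hc,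
    symMax_of_nonneg hord hzero (le_min hna hnb) (le_min hna hnc), min_max_distrib_left]

end SymMaxMin

/-- the symmetric minimum distributes over the symmetric maximum
separately on the nonnegative part and on the nonpositive part of `L`. -/
theorem symMin_distrib_symMax_on_same_sign {L : Type*} [LinearOrder L]
    (neg : L → L) (zero : L)
    (hinv : ∀ x, neg (neg x) = x)
    (hord : ∀ x y, x ≤ y ↔ neg y ≤ neg x)
    (hzero : neg zero = zero)
    (a b c : L)
    (h : (zero ≤ a ∧ zero ≤ b ∧ zero ≤ c) ∨ (a ≤ zero ∧ b ≤ zero ∧ c ≤ zero)) :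
    symMin neg zero a (symMax neg zero b c) =
      symMax neg zero (symMin neg zero a b) (symMin neg zero a c) ∧
    symMin neg zero (symMax neg zero b c) a =
      symMax neg zero (symMin neg zero b a) (symMin neg zero c a) := by
  have left : symMin neg zero a (symMax neg zero b c) =
      symMax neg zero (symMin neg zero a b) (symMin neg zero a c) := by
    rcases h with ⟨ha, hb, hc⟩ | ⟨ha, hb, hc⟩
    · exact SymMaxMin.symMin_symMax_of_nonneg hord hzero ha hb hc
    · exact SymMaxMin.symMin_symMax_of_nonpos hinv hord hzero ha hb hc
  refine ⟨left, ?_⟩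
  simpa only [SymMaxMin.symMin_comm] using left
end

section
/- Symmetry and associativity are incompatible: if L contains elements a, b with 0 < a < b, then there exists no binary operation ⊕ on L satisfying simultaneously (C1) x ⊕ y = max(x, y) whenever x ≥ 0 and y ≥ 0, (C2) x ⊕ (−x) = 0 for all x ∈ L, and associativity ((x ⊕ y) ⊕ z = x ⊕ (y ⊕ z) for all x, y, z). -/
theorem op_eq_right_of_op_eq_right_of_assoc {L : Type*} (op : L → L → L)
    (hassoc : ∀ x y z, op (op x y) z = op x (op y z)) {a b c e : L}
    (hab : op a b = b) (hbc : op b c = e) : op a e = e := by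
  rw [← hbc, ← hassoc, hab]

theorem no_symmetric_associative_extension_general {L : Type*} [LinearOrder L]
    (neg : L → L) (zero : L)
    (a b : L) (ha : zero < a) (hab : a < b) :
    ¬ ∃ op : L → L → L,
        (∀ x y, zero ≤ x → zero ≤ y → op x y = max x y) ∧
        (∀ x, op x (neg x) = zero) ∧
        (∀ x y z, op (op x y) z = op x (op y z)) := by
  rintro ⟨op, hmax, hneg, hassoc⟩
  have hab_op : op a b = b := by rw [hmax a b ha.le (ha.trans hab).le, max_eq_right hab.le]
  have ha_zero : op a zero = a := by rw [hmax a zero ha.le le_rfl, max_eq_left ha.le]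
  have ha_zero_eq_zero := op_eq_right_of_op_eq_right_of_assoc op hassoc hab_op (hneg b)
  exact ha.ne' (ha_zero.symm.trans ha_zero_eq_zero)

/-- if `L` contains `a, b` with `zero < a < b`, there is no binary
operation on `L` satisfying (C1), (C2) and associativity simultaneously. -/
theorem no_symmetric_associative_extension {L : Type*} [LinearOrder L]
    (neg : L → L) (zero : L)
    (hinv : ∀ x, neg (neg x) = x)
    (hord : ∀ x y, x ≤ y ↔ neg y ≤ neg x)
    (hzero : neg zero = zero)
    (a b : L) (ha : zero < a) (hab : a < b) :
    ¬ ∃ op : L → L → L,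
        (∀ x y, zero ≤ x → zero ≤ y → op x y = max x y) ∧
        (∀ x, op x (neg x) = zero) ∧
        (∀ x y z, op (op x y) z = op x (op y z)) :=
  no_symmetric_associative_extension_general neg zero a b ha hab
end

section
/- Uniqueness of the symmetric maximum: let ⊕ be a binary operation on L satisfying (C1) x ⊕ y = max(x, y) whenever x ≥ 0 and y ≥ 0, (C2) x ⊕ (−x) = 0 for all x, (C3) −(x ⊕ y) = (−x) ⊕ (−y) for all x, y, and which is associative on every triple whose maximum is not the negation of its minimum, i.e. (x ⊕ y) ⊕ z = x ⊕ (y ⊕ z) whenever max(x, y, z) ≠ −min(x, y, z). Then ⊕ coincides with the symmetric maximum ⊻ on all of L. -/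
section SymmetricMaximum

variable {L : Type*} [LinearOrder L] {neg : L → L} {zero : L}

theorem eq_neg_of_neg_min_eq_max (hinv : Function.Involutive neg) {a b : L}
    (h : neg (min a b) = max a b) : b = neg a := by
  rcases le_total a b with hab | hab
  · rwa [min_eq_left hab, max_eq_right hab, eq_comm] at h
  · rw [min_eq_right hab, max_eq_left hab] at h
    rw [← h, hinv]

theorem symMax_neg_cancel (a : L) : symMax neg zero a (neg a) = zero := if_pos rfl

theorem symMax_eq_max_of_neg_min_lt (hinv : Function.Involutive neg) (hneg : Antitone neg)
    {a b : L} (h : neg (min a b) < max a b) : symMax neg zero a b = max a b := by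
  have ha : neg a < max a b := (hneg (min_le_left a b)).trans_lt h
  have hb : neg b < max a b := (hneg (min_le_right a b)).trans_lt h
  have hM : max (max a (neg a)) (max b (neg b)) = max a b :=
    le_antisymm (max_le (max_le (le_max_left a b) ha.le) (max_le (le_max_right a b) hb.le))
      (max_le_max (le_max_left a _) (le_max_left b _))
  have hba : b ≠ neg a := by
    rintro rfl
    rw [hinv] at hb
    exact lt_irrefl _ (max_lt hb ha)
  unfold symMax
  rw [if_neg hba, hM, if_neg]
  rintro (h' | h')
  exacts [ha.ne' h', hb.ne' h']

theorem symMax_eq_min_of_max_lt_neg_min (hinv : Function.Involutive neg) (hneg : Antitone neg)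
    {a b : L} (h : max a b < neg (min a b)) : symMax neg zero a b = min a b := by
  have ha : a < neg (min a b) := (le_max_left a b).trans_lt h
  have hb : b < neg (min a b) := (le_max_right a b).trans_lt h
  have hM : max (max a (neg a)) (max b (neg b)) = neg (min a b) := by
    refine le_antisymm (max_le (max_le ha.le (hneg (min_le_left a b)))
      (max_le hb.le (hneg (min_le_right a b)))) ?_
    rw [hneg.map_min]
    exact max_le_max (le_max_right a _) (le_max_right b _)
  have hmin : neg (min a b) = neg a ∨ neg (min a b) = neg b := by
    rcases min_choice a b with hm | hm <;> rw [hm] <;> simp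
  have hba : b ≠ neg a := by
    rintro rfl
    rcases hmin with hm | hm
    · exact hb.ne hm.symm
    · rw [hinv] at hm
      exact ha.ne hm.symm
  unfold symMax
  rw [if_neg hba, hM, if_pos hmin, hinv]

end SymmetricMaximum

section UniquenessOfSymmetricMaximum

variable {L : Type*} [LinearOrder L] {neg : L → L} {zero : L} {op : L → L → L}

theorem op_eq_left_of_neg_lt (hinv : Function.Involutive neg) (hneg : Antitone neg)
    (hzero : neg zero = zero)
    (hC1 : ∀ x y, zero ≤ x → zero ≤ y → op x y = max x y)
    (hC2 : ∀ x, op x (neg x) = zero)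
    (hassoc : ∀ x y z, max x (max y z) ≠ neg (min x (min y z)) →
      op (op x y) z = op x (op y z))
    {x y : L} (hx : zero ≤ x) (hy : y ≤ zero) (h : neg y < x) : op x y = x := by
  have hy' : zero ≤ neg y := hzero ▸ hneg hy
  have hextremes : max x (max (neg y) y) ≠ neg (min x (min (neg y) y)) := by
    rw [max_eq_left (hy.trans hy'), max_eq_left h.le, min_eq_right (hy.trans hy'),
      min_eq_right (hy.trans hx)]
    exact h.ne'
  calc op x y = op (op x (neg y)) y := by rw [hC1 x (neg y) hx hy', max_eq_left h.le]
    _ = op x (op (neg y) y) := hassoc _ _ _ hextremes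
    _ = op x zero := by rw [← hC2 (neg y), hinv]
    _ = x := by rw [hC1 x zero hx le_rfl, max_eq_left hx]

theorem op_eq_right_of_neg_lt (hneg : Antitone neg) (hzero : neg zero = zero)
    (hC1 : ∀ x y, zero ≤ x → zero ≤ y → op x y = max x y)
    (hC2 : ∀ x, op x (neg x) = zero)
    (hassoc : ∀ x y z, max x (max y z) ≠ neg (min x (min y z)) →
      op (op x y) z = op x (op y z))
    {x y : L} (hx : x ≤ zero) (hy : zero ≤ y) (h : neg x < y) : op x y = y := by
  have hx' : zero ≤ neg x := hzero ▸ hneg hx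
  have hextremes : max x (max (neg x) y) ≠ neg (min x (min (neg x) y)) := by
    rw [max_eq_right h.le, max_eq_right (hx.trans (hx'.trans h.le)), min_eq_left h.le,
      min_eq_left (hx.trans hx')]
    exact h.ne'
  calc op x y = op x (op (neg x) y) := by rw [hC1 (neg x) y hx' hy, max_eq_right h.le]
    _ = op (op x (neg x)) y := (hassoc _ _ _ hextremes).symm
    _ = op zero y := by rw [hC2]
    _ = y := by rw [hC1 zero y le_rfl hy, max_eq_right hy]

theorem op_eq_max_of_neg_min_lt (hinv : Function.Involutive neg) (hneg : Antitone neg)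
    (hzero : neg zero = zero)
    (hC1 : ∀ x y, zero ≤ x → zero ≤ y → op x y = max x y)
    (hC2 : ∀ x, op x (neg x) = zero)
    (hassoc : ∀ x y z, max x (max y z) ≠ neg (min x (min y z)) →
      op (op x y) z = op x (op y z))
    {a b : L} (h : neg (min a b) < max a b) : op a b = max a b := by
  rcases le_total zero a with ha | ha <;> rcases le_total zero b with hb | hb
  · exact hC1 a b ha hb
  · rw [min_eq_right (hb.trans ha), max_eq_left (hb.trans ha)] at h
    rw [max_eq_left (hb.trans ha), op_eq_left_of_neg_lt hinv hneg hzero hC1 hC2 hassoc ha hb h]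
  · rw [min_eq_left (ha.trans hb), max_eq_right (ha.trans hb)] at h
    rw [max_eq_right (ha.trans hb), op_eq_right_of_neg_lt hneg hzero hC1 hC2 hassoc ha hb h]
  · have hmin : zero ≤ neg (min a b) := hzero ▸ hneg (min_le_left a b |>.trans ha)
    exact absurd (max_le ha hb) (hmin.trans_lt h).not_ge

theorem op_eq_min_of_max_lt_neg_min (hinv : Function.Involutive neg) (hneg : Antitone neg)
    (hzero : neg zero = zero)
    (hC1 : ∀ x y, zero ≤ x → zero ≤ y → op x y = max x y)
    (hC2 : ∀ x, op x (neg x) = zero)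
    (hC3 : ∀ x y, neg (op x y) = op (neg x) (neg y))
    (hassoc : ∀ x y z, max x (max y z) ≠ neg (min x (min y z)) →
      op (op x y) z = op x (op y z))
    {a b : L} (h : max a b < neg (min a b)) : op a b = min a b := by
  have h' : neg (min (neg a) (neg b)) < max (neg a) (neg b) := by
    rwa [← hneg.map_max, ← hneg.map_min, hinv]
  apply hinv.injective
  rw [hC3, op_eq_max_of_neg_min_lt hinv hneg hzero hC1 hC2 hassoc h', hneg.map_min]

end UniquenessOfSymmetricMaximum

/-- any operation satisfying (C1), (C2), (C3) and associativity on
every triple whose maximum is not the negation of its minimum coincides with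
the symmetric maximum. -/
theorem symMax_unique {L : Type*} [LinearOrder L]
    (neg : L → L) (zero : L)
    (hinv : ∀ x, neg (neg x) = x)
    (hord : ∀ x y, x ≤ y ↔ neg y ≤ neg x)
    (hzero : neg zero = zero)
    (op : L → L → L)
    (hC1 : ∀ x y, zero ≤ x → zero ≤ y → op x y = max x y)
    (hC2 : ∀ x, op x (neg x) = zero)
    (hC3 : ∀ x y, neg (op x y) = op (neg x) (neg y))
    (hassoc : ∀ x y z, max x (max y z) ≠ neg (min x (min y z)) →
      op (op x y) z = op x (op y z)) :
    ∀ a b, op a b = symMax neg zero a b := by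
  have hneg : Antitone neg := fun x y hxy => (hord x y).mp hxy
  intro a b
  rcases lt_trichotomy (neg (min a b)) (max a b) with h | h | h
  · rw [op_eq_max_of_neg_min_lt hinv hneg hzero hC1 hC2 hassoc h,
      symMax_eq_max_of_neg_min_lt hinv hneg h]
  · rw [eq_neg_of_neg_min_eq_max hinv h, hC2, symMax_neg_cancel]
  · rw [op_eq_min_of_max_lt_neg_min hinv hneg hzero hC1 hC2 hC3 hassoc h,
      symMax_eq_min_of_max_lt_neg_min hinv hneg h]
end

section
/- Let ⊕ be a commutative binary operation on L satisfying (C1) x ⊕ y = max(x, y) whenever x ≥ 0 and y ≥ 0, and (C3+) −(x ⊕ y) = (−x) ⊕ (−y) for all x, y ≥ 0. Then: (a) 0 is a neutral element of ⊕ (x ⊕ 0 = x for all x ∈ L); (b) if moreover ⊕ is associative, then |a ⊕ (−a)| ≥ |a| for every a ∈ L; (c) if moreover ⊕ is associative and isotone in each argument, then |a ⊕ (−a)| = |a| for every a ∈ L. -/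
/-!
Write `|x|` for `max x (neg x)`. Neutrality of `zero` for negative `x` is (C3+) applied to
`(neg x) ⊕ zero = neg x`. For the symmetric defect one may replace `a` by `m = |a| ≥ zero`,
since `a ⊕ (−a)` only depends on `{a, −a}`. By associativity `b = m ⊕ (−m)` absorbs both `m`
and `−m` (because `m ⊕ m = m` and `(−m) ⊕ (−m) = −m`); by (C1), resp. (C3+), an element
absorbing `m` and `−m` is `≥ m` if it is nonnegative, resp. has negation `≥ m` if it is
negative. Under isotonicity, `−m = (−m) ⊕ (−m) ≤ b ≤ m ⊕ m = m` gives the reverse bound.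
-/

namespace SymmetricDefect

variable {L : Type*} [LinearOrder L] {neg : L → L} {zero : L} {op : L → L → L}

theorem neg_nonpos_of_nonneg (hord : ∀ x y, x ≤ y ↔ neg y ≤ neg x) (hzero : neg zero = zero)
    {x : L} (hx : zero ≤ x) : neg x ≤ zero :=
  hzero ▸ (hord zero x).mp hx

theorem nonneg_neg_of_nonpos (hord : ∀ x y, x ≤ y ↔ neg y ≤ neg x) (hzero : neg zero = zero)
    {x : L} (hx : x ≤ zero) : zero ≤ neg x :=
  hzero ▸ (hord x zero).mp hx

theorem nonneg_max_neg_self (hord : ∀ x y, x ≤ y ↔ neg y ≤ neg x) (hzero : neg zero = zero)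
    (x : L) : zero ≤ max x (neg x) := by
  rcases le_total zero x with hx | hx
  · exact hx.trans (le_max_left _ _)
  · exact (nonneg_neg_of_nonpos hord hzero hx).trans (le_max_right _ _)

theorem max_neg_le_of_neg_le_of_le (hinv : ∀ x, neg (neg x) = x)
    (hord : ∀ x y, x ≤ y ↔ neg y ≤ neg x) {b m : L} (hlo : neg m ≤ b) (hhi : b ≤ m) :
    max b (neg b) ≤ m :=
  max_le hhi (by simpa only [hinv] using (hord (neg m) b).mp hlo)

theorem op_zero_right (hinv : ∀ x, neg (neg x) = x) (hord : ∀ x y, x ≤ y ↔ neg y ≤ neg x)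
    (hzero : neg zero = zero) (hC1 : ∀ x y, zero ≤ x → zero ≤ y → op x y = max x y)
    (hC3p : ∀ x y, zero ≤ x → zero ≤ y → neg (op x y) = op (neg x) (neg y)) (x : L) :
    op x zero = x := by
  rcases le_total zero x with hx | hx
  · rw [hC1 x zero hx le_rfl, max_eq_left hx]
  · have hnx := nonneg_neg_of_nonpos hord hzero hx
    have h := hC3p (neg x) zero hnx le_rfl
    rw [hC1 (neg x) zero hnx le_rfl, max_eq_left hnx, hinv, hzero] at h
    exact h.symm

theorem op_self_of_nonneg (hC1 : ∀ x y, zero ≤ x → zero ≤ y → op x y = max x y) {m : L}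
    (hm : zero ≤ m) : op m m = m := by
  rw [hC1 m m hm hm, max_self]

theorem op_neg_self_neg_of_nonneg (hC1 : ∀ x y, zero ≤ x → zero ≤ y → op x y = max x y)
    (hC3p : ∀ x y, zero ≤ x → zero ≤ y → neg (op x y) = op (neg x) (neg y)) {m : L}
    (hm : zero ≤ m) : op (neg m) (neg m) = neg m := by
  rw [← hC3p m m hm hm, op_self_of_nonneg hC1 hm]

theorem op_max_neg_self (hinv : ∀ x, neg (neg x) = x) (hcomm : ∀ x y, op x y = op y x)
    (a : L) : op (max a (neg a)) (neg (max a (neg a))) = op a (neg a) := by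
  rcases max_choice a (neg a) with h | h
  · rw [h]
  · rw [h, hinv, hcomm]

theorem le_max_neg_of_op_eq_of_op_neg_eq (hinv : ∀ x, neg (neg x) = x)
    (hord : ∀ x y, x ≤ y ↔ neg y ≤ neg x) (hzero : neg zero = zero)
    (hC1 : ∀ x y, zero ≤ x → zero ≤ y → op x y = max x y)
    (hC3p : ∀ x y, zero ≤ x → zero ≤ y → neg (op x y) = op (neg x) (neg y)) {m b : L}
    (hm : zero ≤ m) (hmb : op m b = b) (hnmb : op (neg m) b = b) : m ≤ max b (neg b) := by
  rcases le_total zero b with hb | hb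
  · have : max m b = b := by rw [← hC1 m b hm hb, hmb]
    exact (this ▸ le_max_left m b).trans (le_max_left _ _)
  · have hnb := nonneg_neg_of_nonpos hord hzero hb
    have h := hC3p m (neg b) hm hnb
    rw [hinv, hnmb, hC1 m (neg b) hm hnb] at h
    have : max m (neg b) = neg b := by simpa only [hinv] using congrArg neg h
    exact (this ▸ le_max_left m (neg b)).trans (le_max_right _ _)

theorem le_max_op_neg_self_of_nonneg (hinv : ∀ x, neg (neg x) = x)
    (hord : ∀ x y, x ≤ y ↔ neg y ≤ neg x) (hzero : neg zero = zero)
    (hcomm : ∀ x y, op x y = op y x) (hassoc : ∀ x y z, op (op x y) z = op x (op y z))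
    (hC1 : ∀ x y, zero ≤ x → zero ≤ y → op x y = max x y)
    (hC3p : ∀ x y, zero ≤ x → zero ≤ y → neg (op x y) = op (neg x) (neg y)) {m : L}
    (hm : zero ≤ m) : m ≤ max (op m (neg m)) (neg (op m (neg m))) := by
  refine le_max_neg_of_op_eq_of_op_neg_eq hinv hord hzero hC1 hC3p hm ?_ ?_
  · rw [← hassoc, op_self_of_nonneg hC1 hm]
  · rw [hcomm m, ← hassoc, op_neg_self_neg_of_nonneg hC1 hC3p hm]

theorem max_op_neg_self_le_of_nonneg (hinv : ∀ x, neg (neg x) = x)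
    (hord : ∀ x y, x ≤ y ↔ neg y ≤ neg x) (hzero : neg zero = zero)
    (hC1 : ∀ x y, zero ≤ x → zero ≤ y → op x y = max x y)
    (hC3p : ∀ x y, zero ≤ x → zero ≤ y → neg (op x y) = op (neg x) (neg y))
    (hmonoL : ∀ x x' y, x ≤ x' → op x y ≤ op x' y) (hmonoR : ∀ x y y', y ≤ y' → op x y ≤ op x y')
    {m : L} (hm : zero ≤ m) : max (op m (neg m)) (neg (op m (neg m))) ≤ m := by
  have hnm : neg m ≤ m := (neg_nonpos_of_nonneg hord hzero hm).trans hm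
  refine max_neg_le_of_neg_le_of_le hinv hord ?_ ?_
  · calc neg m = op (neg m) (neg m) := (op_neg_self_neg_of_nonneg hC1 hC3p hm).symm
      _ ≤ op m (neg m) := hmonoL _ _ _ hnm
  · calc op m (neg m) ≤ op m m := hmonoR _ _ _ hnm
      _ = m := op_self_of_nonneg hC1 hm

end SymmetricDefect

open SymmetricDefect in

/-- for a commutative operation satisfying (C1) and (C3+):
(a) `zero` is neutral; (b) associativity forces `|a ⊕ (−a)| ≥ |a|`;
(c) associativity together with isotonicity in each argument forces
`|a ⊕ (−a)| = |a|`.  Here `|x| = max x (neg x)`. -/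
theorem neutral_and_symmetric_defect {L : Type*} [LinearOrder L]
    (neg : L → L) (zero : L)
    (hinv : ∀ x, neg (neg x) = x)
    (hord : ∀ x y, x ≤ y ↔ neg y ≤ neg x)
    (hzero : neg zero = zero)
    (op : L → L → L)
    (hcomm : ∀ x y, op x y = op y x)
    (hC1 : ∀ x y, zero ≤ x → zero ≤ y → op x y = max x y)
    (hC3p : ∀ x y, zero ≤ x → zero ≤ y → neg (op x y) = op (neg x) (neg y)) :
    (∀ x, op x zero = x) ∧
    ((∀ x y z, op (op x y) z = op x (op y z)) →
      (∀ a, max a (neg a) ≤ max (op a (neg a)) (neg (op a (neg a)))) ∧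
      (((∀ x x' y, x ≤ x' → op x y ≤ op x' y) ∧
        (∀ x y y', y ≤ y' → op x y ≤ op x y')) →
        ∀ a, max (op a (neg a)) (neg (op a (neg a))) = max a (neg a))) := by
  refine ⟨op_zero_right hinv hord hzero hC1 hC3p, fun hassoc => ⟨fun a => ?_, ?_⟩⟩
  · have hm := nonneg_max_neg_self hord hzero a
    rw [← op_max_neg_self hinv hcomm a]
    exact le_max_op_neg_self_of_nonneg hinv hord hzero hcomm hassoc hC1 hC3p hm
  · rintro ⟨hmonoL, hmonoR⟩ a
    have hm := nonneg_max_neg_self hord hzero a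
    rw [← op_max_neg_self hinv hcomm a]
    exact le_antisymm (max_op_neg_self_le_of_nonneg hinv hord hzero hC1 hC3p hmonoL hmonoR hm)
      (le_max_op_neg_self_of_nonneg hinv hord hzero hcomm hassoc hC1 hC3p hm)
end

section
/- The splitting rule is isotone: for any finite index set I and families a, a' : I → L with a(i) ≤ a'(i) for every i ∈ I, one has ⟨⊻ {a(i) : i ∈ I}⟩₋⁺ ≤ ⟨⊻ {a'(i) : i ∈ I}⟩₋⁺ (multisets of values). -/
/-!
The nonnegative part `p` and the negative part `q` are each monotone in the data: a term that
is nonnegative for `a` stays nonnegative, and larger, for `a'`, while a term that is negative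
for `a'` was already negative, and smaller, for `a`. On the region `q ≤ 0 ≤ p` the symmetric
maximum is `p` if `-q < p`, `q` if `p < -q` and `0` on a tie, which is monotone in both arguments.
-/

namespace Multiset

variable {α : Type*} [LinearOrder α] {b c : α} {s : Multiset α}

theorem fold_max_le_iff : s.fold max b ≤ c ↔ b ≤ c ∧ ∀ x ∈ s, x ≤ c := by
  induction s using Multiset.induction_on with
  | empty => simp
  | cons a s ih => simp [ih, or_imp, forall_and, and_left_comm]

theorem le_fold_min_iff : c ≤ s.fold min b ↔ c ≤ b ∧ ∀ x ∈ s, c ≤ x := by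
  induction s using Multiset.induction_on with
  | empty => simp
  | cons a s ih => simp [ih, or_imp, forall_and, and_left_comm]

theorem self_le_fold_max (b : α) (s : Multiset α) : b ≤ s.fold max b :=
  (fold_max_le_iff.mp le_rfl).1

theorem le_fold_max_of_mem {x : α} (hx : x ∈ s) : x ≤ s.fold max b :=
  (fold_max_le_iff.mp le_rfl).2 x hx

theorem fold_min_le_self (b : α) (s : Multiset α) : s.fold min b ≤ b :=
  (le_fold_min_iff.mp le_rfl).1

theorem fold_min_le_of_mem {x : α} (hx : x ∈ s) : s.fold min b ≤ x :=
  (le_fold_min_iff.mp le_rfl).2 x hx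

end Multiset

section SplitEval

variable {L : Type*} [LinearOrder L] {neg : L → L} {zero : L}

theorem fold_max_filter_nonneg_map_mono {ι : Type*} {s : Multiset ι} {f g : ι → L}
    (hfg : ∀ i ∈ s, f i ≤ g i) :
    ((s.map f).filter (fun x => zero ≤ x)).fold max zero ≤
      ((s.map g).filter (fun x => zero ≤ x)).fold max zero := by
  refine Multiset.fold_max_le_iff.mpr ⟨Multiset.self_le_fold_max _ _, fun x hx => ?_⟩
  obtain ⟨hx, hzx⟩ := Multiset.mem_filter.mp hx
  obtain ⟨i, hi, rfl⟩ := Multiset.mem_map.mp hx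
  have hfi := hfg i hi
  exact hfi.trans <| Multiset.le_fold_max_of_mem <|
    Multiset.mem_filter.mpr ⟨Multiset.mem_map_of_mem g hi, hzx.trans hfi⟩

theorem fold_min_filter_neg_map_mono {ι : Type*} {s : Multiset ι} {f g : ι → L}
    (hfg : ∀ i ∈ s, f i ≤ g i) :
    ((s.map f).filter (fun x => x < zero)).fold min zero ≤
      ((s.map g).filter (fun x => x < zero)).fold min zero := by
  refine Multiset.le_fold_min_iff.mpr ⟨Multiset.fold_min_le_self _ _, fun x hx => ?_⟩
  obtain ⟨hx, hxz⟩ := Multiset.mem_filter.mp hx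
  obtain ⟨i, hi, rfl⟩ := Multiset.mem_map.mp hx
  have hfi := hfg i hi
  have hf : f i ∈ (s.map f).filter (fun x => x < zero) :=
    Multiset.mem_filter.mpr ⟨Multiset.mem_map_of_mem f hi, hfi.trans_lt hxz⟩
  exact (Multiset.fold_min_le_of_mem hf).trans hfi

theorem symMax_of_nonneg_of_nonpos (hinv : ∀ x, neg (neg x) = x)
    (hord : ∀ x y, x ≤ y ↔ neg y ≤ neg x) (hzero : neg zero = zero)
    {p q : L} (hp : zero ≤ p) (hq : q ≤ zero) :
    symMax neg zero p q = if neg q < p then p else if p < neg q then q else zero := by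
  have hnp : neg p ≤ zero := hzero ▸ (hord zero p).mp hp
  have hnq : zero ≤ neg q := hzero ▸ (hord q zero).mp hq
  rw [symMax, max_eq_left (hnp.trans hp), max_eq_right (hq.trans hnq)]
  rcases lt_trichotomy (neg q) p with hlt | heq | hgt
  · have hqp : q ≠ neg p := fun e => by rw [e, hinv] at hlt; exact hlt.false
    have hpp : p ≠ neg p := fun e => by order
    simp [hqp, hpp, hlt, hlt.ne', max_eq_left hlt.le]
  · have hqp : q = neg p := by rw [← heq, hinv]
    simp [hqp, hinv]
  · have hqp : q ≠ neg p := fun e => by rw [e, hinv] at hgt; exact hgt.false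
    simp [hqp, hgt, hgt.le, not_lt.mpr hgt.le, hinv]

theorem symMax_mono (hinv : ∀ x, neg (neg x) = x)
    (hord : ∀ x y, x ≤ y ↔ neg y ≤ neg x) (hzero : neg zero = zero)
    {p q p' q' : L} (hp : zero ≤ p) (hq : q ≤ zero) (hp' : zero ≤ p') (hq' : q' ≤ zero)
    (hpp' : p ≤ p') (hqq' : q ≤ q') :
    symMax neg zero p q ≤ symMax neg zero p' q' := by
  have hneg : neg q' ≤ neg q := (hord q q').mp hqq'
  rw [symMax_of_nonneg_of_nonpos hinv hord hzero hp hq,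
    symMax_of_nonneg_of_nonpos hinv hord hzero hp' hq']
  split_ifs <;> order

theorem splitEval_map_mono (hinv : ∀ x, neg (neg x) = x)
    (hord : ∀ x y, x ≤ y ↔ neg y ≤ neg x) (hzero : neg zero = zero)
    {ι : Type*} {s : Multiset ι} {f g : ι → L} (hfg : ∀ i ∈ s, f i ≤ g i) :
    splitEval neg zero (s.map f) ≤ splitEval neg zero (s.map g) :=
  symMax_mono hinv hord hzero (Multiset.self_le_fold_max _ _) (Multiset.fold_min_le_self _ _)
    (Multiset.self_le_fold_max _ _) (Multiset.fold_min_le_self _ _)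
    (fold_max_filter_nonneg_map_mono hfg) (fold_min_filter_neg_map_mono hfg)

end SplitEval

/-- the splitting rule is isotone. -/
theorem splitEval_isotone {L : Type*} [LinearOrder L]
    (neg : L → L) (zero : L)
    (hinv : ∀ x, neg (neg x) = x)
    (hord : ∀ x y, x ≤ y ↔ neg y ≤ neg x)
    (hzero : neg zero = zero)
    {I : Type*} [Fintype I]
    (a a' : I → L) (h : ∀ i, a i ≤ a' i) :
    splitEval neg zero (Finset.univ.val.map a) ≤
      splitEval neg zero (Finset.univ.val.map a') :=
  splitEval_map_mono hinv hord hzero fun i _ => h i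
end

section
/- Necessary condition for solvability of the inversion equation under the splitting rule: let X be a poset in which every principal ideal {y : y ≤ x} is finite, and let f, g : X → L satisfy g(x) = ⟨⊻ {f(y) : y ≤ x}⟩₋⁺ for every x ∈ X. Then for every x ∈ X, either g(x) = 0 or |g(y)| ≤ |g(x)| for every y with y ⋖ x. -/
namespace Multiset

variable {L : Type*} [LinearOrder L]

lemma le_fold_max_init (b : L) (s : Multiset L) : b ≤ s.fold max b := by
  induction s using Multiset.induction_on with
  | empty => simp
  | cons a s ih => exact (fold_cons_left max b a s).symm ▸ le_max_of_le_right ih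

lemma fold_min_le_init (b : L) (s : Multiset L) : s.fold min b ≤ b :=
  le_fold_max_init (L := Lᵒᵈ) b s

lemma fold_max_mono (b : L) {s t : Multiset L} (h : s ≤ t) : s.fold max b ≤ t.fold max b := by
  obtain ⟨u, rfl⟩ := le_iff_exists_add.1 h
  calc s.fold max b ≤ max (s.fold max b) (u.fold max b) := le_max_left _ _
    _ = (s + u).fold max b := by rw [← fold_add max, max_self]

lemma fold_min_anti (b : L) {s t : Multiset L} (h : s ≤ t) : t.fold min b ≤ s.fold min b :=
  fold_max_mono (L := Lᵒᵈ) b h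

end Multiset

section SplitEval

variable {L : Type*} [LinearOrder L] (neg : L → L) (zero : L)

def splitMagnitude (s : Multiset L) : L :=
  max ((s.filter (fun x => zero ≤ x)).fold max zero)
    (neg ((s.filter (fun x => x < zero)).fold min zero))

variable {neg zero}

lemma zero_le_splitMagnitude (s : Multiset L) : zero ≤ splitMagnitude neg zero s :=
  le_max_of_le_left (Multiset.le_fold_max_init zero _)

lemma splitMagnitude_mono (hord : ∀ x y, x ≤ y ↔ neg y ≤ neg x) {s t : Multiset L}
    (h : s ≤ t) : splitMagnitude neg zero s ≤ splitMagnitude neg zero t :=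
  max_le_max (Multiset.fold_max_mono zero (Multiset.filter_le_filter _ h))
    ((hord _ _).1 (Multiset.fold_min_anti zero (Multiset.filter_le_filter _ h)))

lemma abs_symMax_of_ne_zero (hinv : ∀ x, neg (neg x) = x)
    (hord : ∀ x y, x ≤ y ↔ neg y ≤ neg x) (hzero : neg zero = zero)
    {p q : L} (hp : zero ≤ p) (hq : q ≤ zero) (h : symMax neg zero p q ≠ zero) :
    max (symMax neg zero p q) (neg (symMax neg zero p q)) = max p (neg q) := by
  have hnp : neg p ≤ zero := hzero ▸ (hord zero p).1 hp
  have hnq : zero ≤ neg q := hzero ▸ (hord q zero).1 hq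
  have hM : zero ≤ max p (neg q) := le_max_of_le_left hp
  have hnM : neg (max p (neg q)) ≤ max p (neg q) := (hzero ▸ (hord zero _).1 hM).trans hM
  unfold symMax at h ⊢
  rw [max_eq_left (hnp.trans hp), max_eq_right (hq.trans hnq)] at h ⊢
  split_ifs at h ⊢
  · exact absurd rfl h
  · rw [hinv, max_eq_right hnM]
  · exact max_eq_left hnM

lemma abs_splitEval_of_ne_zero (hinv : ∀ x, neg (neg x) = x)
    (hord : ∀ x y, x ≤ y ↔ neg y ≤ neg x) (hzero : neg zero = zero) {s : Multiset L}
    (h : splitEval neg zero s ≠ zero) :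
    max (splitEval neg zero s) (neg (splitEval neg zero s)) = splitMagnitude neg zero s :=
  abs_symMax_of_ne_zero hinv hord hzero (Multiset.le_fold_max_init _ _)
    (Multiset.fold_min_le_init _ _) h

lemma abs_splitEval_le (hinv : ∀ x, neg (neg x) = x)
    (hord : ∀ x y, x ≤ y ↔ neg y ≤ neg x) (hzero : neg zero = zero) (s : Multiset L) :
    max (splitEval neg zero s) (neg (splitEval neg zero s)) ≤ splitMagnitude neg zero s := by
  by_cases h : splitEval neg zero s = zero
  · rw [h, hzero, max_self]
    exact zero_le_splitMagnitude s
  · exact (abs_splitEval_of_ne_zero hinv hord hzero h).le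

end SplitEval

/-- if `g (x) = ⟨⊻_{y ≤ x} f (y)⟩₋⁺` on a poset whose principal
ideals are finite, then at each `x`, either `g x = zero` or
`|g y| ≤ |g x|` for every `y` covered by `x`.  Here `|x| = max x (neg x)`. -/
theorem splitEval_inversion_necessary_condition {L : Type*} [LinearOrder L]
    (neg : L → L) (zero : L)
    (hinv : ∀ x, neg (neg x) = x)
    (hord : ∀ x y, x ≤ y ↔ neg y ≤ neg x)
    (hzero : neg zero = zero)
    {X : Type*} [PartialOrder X]
    (hfin : ∀ x : X, {y | y ≤ x}.Finite)
    (f g : X → L)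
    (hg : ∀ x, g x = splitEval neg zero ((hfin x).toFinset.val.map f)) :
    ∀ x : X, g x = zero ∨
      ∀ y, y ⋖ x → max (g y) (neg (g y)) ≤ max (g x) (neg (g x)) := by
  intro x
  refine or_iff_not_imp_left.2 fun hx y hyx => ?_
  have hideal : (hfin y).toFinset.val.map f ≤ (hfin x).toFinset.val.map f :=
    Multiset.map_le_map <| Finset.val_le_iff.2 <|
      Set.Finite.toFinset_subset_toFinset.2 <| Set.Iic_subset_Iic.2 hyx.le
  rw [hg x] at hx ⊢
  rw [hg y, abs_splitEval_of_ne_zero hinv hord hzero hx]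
  exact (abs_splitEval_le hinv hord hzero _).trans (splitMagnitude_mono hord hideal)
end

section
/- Properties of the canonical Möbius transform under the splitting rule: let X be a poset in which every principal ideal {y : y ≤ x} is finite, and let g : X → L be such that |g| is isotone (y ≤ x implies |g(y)| ≤ |g(x)|). Define f(x) := ⟨⊻ ({g(x)} + {−g(y) : y ⋖ x})⟩₋⁺ (a multiset with one term g(x) and one term −g(y) for each y covered by x). Then for every x ∈ X: (i) if for every y ⋖ x either |g(x)| > |g(y)| or g(x) = −g(y), then f(x) = g(x); (ii) if g(x) = g(y) for some y ⋖ x, then f(x) = 0; (iii) for every y ≤ x with |g(y)| < |g(x)|, one has |f(y)| < |g(x)|. -/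
/-- An order-reversing involution fixing `zero`; `max x (neg x)` plays the role of `|x|`, and
lemmas about it are named `abs_*`. -/
structure IsOrderNeg {L : Type*} [LinearOrder L] (neg : L → L) (zero : L) : Prop where
  neg_neg : ∀ x, neg (neg x) = x
  le_iff_neg_le_neg : ∀ x y, x ≤ y ↔ neg y ≤ neg x
  neg_zero : neg zero = zero

namespace IsOrderNeg

variable {L : Type*} [LinearOrder L] {neg : L → L} {zero a b : L}

theorem neg_le_neg (hn : IsOrderNeg neg zero) (h : a ≤ b) : neg b ≤ neg a :=
  (hn.le_iff_neg_le_neg a b).1 h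

theorem neg_lt_neg (hn : IsOrderNeg neg zero) (h : a < b) : neg b < neg a :=
  lt_of_not_ge fun h' => h.not_ge (by simpa only [hn.neg_neg] using hn.neg_le_neg h')

theorem neg_nonpos (hn : IsOrderNeg neg zero) (h : zero ≤ a) : neg a ≤ zero :=
  hn.neg_zero ▸ hn.neg_le_neg h

theorem neg_nonneg (hn : IsOrderNeg neg zero) (h : a ≤ zero) : zero ≤ neg a :=
  hn.neg_zero ▸ hn.neg_le_neg h

theorem neg_pos (hn : IsOrderNeg neg zero) (h : a < zero) : zero < neg a :=
  hn.neg_zero ▸ hn.neg_lt_neg h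

theorem neg_neg_of_pos (hn : IsOrderNeg neg zero) (h : zero < a) : neg a < zero :=
  hn.neg_zero ▸ hn.neg_lt_neg h

theorem neg_lt_comm (hn : IsOrderNeg neg zero) : neg a < b ↔ neg b < a := by
  constructor <;> intro h <;> simpa only [hn.neg_neg] using hn.neg_lt_neg h

theorem abs_of_nonneg (hn : IsOrderNeg neg zero) (h : zero ≤ a) : max a (neg a) = a :=
  max_eq_left ((hn.neg_nonpos h).trans h)

theorem abs_of_nonpos (hn : IsOrderNeg neg zero) (h : a ≤ zero) : max a (neg a) = neg a :=
  max_eq_right (h.trans (hn.neg_nonneg h))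

theorem abs_nonneg (hn : IsOrderNeg neg zero) (a : L) : zero ≤ max a (neg a) := by
  rcases le_total zero a with h | h
  · exact le_max_of_le_left h
  · exact le_max_of_le_right (hn.neg_nonneg h)

theorem abs_neg (hn : IsOrderNeg neg zero) (a : L) : max (neg a) (neg (neg a)) = max a (neg a) := by
  rw [hn.neg_neg, max_comm]

theorem abs_zero (hn : IsOrderNeg neg zero) : max zero (neg zero) = zero := by
  rw [hn.neg_zero, max_self]

theorem eq_neg_comm (hn : IsOrderNeg neg zero) : a = neg b ↔ b = neg a := by
  constructor <;> rintro rfl <;> exact (hn.neg_neg _).symm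

end IsOrderNeg

theorem Multiset.fold_eq_toFinset_fold {α : Type*} [DecidableEq α] (op : α → α → α)
    [Std.Commutative op] [Std.Associative op] [Std.IdempotentOp op] (b : α) (s : Multiset α) :
    s.fold op b = s.toFinset.fold op b id := by
  rw [Finset.fold, Multiset.map_id, Multiset.toFinset_val, Multiset.fold_dedup_idem]

section Split

variable {L : Type*} [LinearOrder L]

/-- `p` in `⟨⊻ s⟩₋⁺ = p ⊻ q`. -/
def splitPos (zero : L) (s : Multiset L) : L :=
  (s.filter (fun x => zero ≤ x)).fold max zero

/-- `q` in `⟨⊻ s⟩₋⁺ = p ⊻ q`. -/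
def splitNeg (zero : L) (s : Multiset L) : L :=
  (s.filter (fun x => x < zero)).fold min zero

variable {zero c b : L} {s : Multiset L}

theorem splitPos_le_iff :
    splitPos zero s ≤ c ↔ zero ≤ c ∧ ∀ b ∈ s, zero ≤ b → b ≤ c := by
  simp [splitPos, Multiset.fold_eq_toFinset_fold, Finset.fold_max_le]

theorem splitPos_lt_iff :
    splitPos zero s < c ↔ zero < c ∧ ∀ b ∈ s, zero ≤ b → b < c := by
  simp [splitPos, Multiset.fold_eq_toFinset_fold, Finset.fold_max_lt]

theorem zero_le_splitPos : zero ≤ splitPos zero s := by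
  simp [splitPos, Multiset.fold_eq_toFinset_fold, Finset.le_fold_max]

theorem le_splitPos (hb : b ∈ s) (h : zero ≤ b) : b ≤ splitPos zero s := by
  simp only [splitPos, Multiset.fold_eq_toFinset_fold, Finset.le_fold_max]
  exact Or.inr ⟨b, by simp [hb, h], le_rfl⟩

theorem le_splitNeg_iff :
    c ≤ splitNeg zero s ↔ c ≤ zero ∧ ∀ b ∈ s, b < zero → c ≤ b := by
  simp [splitNeg, Multiset.fold_eq_toFinset_fold, Finset.le_fold_min]

theorem lt_splitNeg_iff :
    c < splitNeg zero s ↔ c < zero ∧ ∀ b ∈ s, b < zero → c < b := by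
  simp [splitNeg, Multiset.fold_eq_toFinset_fold, Finset.lt_fold_min]

theorem splitNeg_le_zero : splitNeg zero s ≤ zero := by
  simp [splitNeg, Multiset.fold_eq_toFinset_fold, Finset.fold_min_le]

theorem splitNeg_le (hb : b ∈ s) (h : b < zero) : splitNeg zero s ≤ b := by
  simp only [splitNeg, Multiset.fold_eq_toFinset_fold, Finset.fold_min_le]
  exact Or.inr ⟨b, by simp [hb, h], le_rfl⟩

theorem splitEval_eq (neg : L → L) (zero : L) (s : Multiset L) :
    splitEval neg zero s = symMax neg zero (splitPos zero s) (splitNeg zero s) := rfl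

end Split

section SymMax

variable {L : Type*} [LinearOrder L] {neg : L → L} {zero : L}

theorem symMax_comm (hn : IsOrderNeg neg zero) (a b : L) :
    symMax neg zero a b = symMax neg zero b a := by
  simp only [symMax, max_comm (max a (neg a)), hn.eq_neg_comm (a := b), or_comm]

theorem symMax_of_abs_lt_left (hn : IsOrderNeg neg zero) {a b : L}
    (h : max b (neg b) < max a (neg a)) : symMax neg zero a b = a := by
  have hb : b ≠ neg a := by
    rintro rfl
    exact h.ne (hn.abs_neg a)
  have hnb : max a (neg a) ≠ neg b := (lt_of_le_of_lt (le_max_right _ _) h).ne'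
  rw [symMax, if_neg hb, max_eq_left h.le]
  rcases le_total zero a with ha | ha
  · have hna : a ≠ neg a := fun hna => by
      rw [← hna, max_self] at h
      exact (hn.abs_nonneg b).not_gt (h.trans_le (hna ▸ hn.neg_nonpos ha))
    rw [hn.abs_of_nonneg ha] at hnb ⊢
    rw [if_neg (not_or.2 ⟨hna, hnb⟩)]
  · rw [hn.abs_of_nonpos ha, if_pos (Or.inl rfl), hn.neg_neg]

theorem symMax_of_abs_lt_right (hn : IsOrderNeg neg zero) {a b : L}
    (h : max a (neg a) < max b (neg b)) : symMax neg zero a b = b := by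
  rw [symMax_comm hn, symMax_of_abs_lt_left hn h]

theorem abs_symMax_le (hn : IsOrderNeg neg zero) (a b : L) :
    max (symMax neg zero a b) (neg (symMax neg zero a b)) ≤
      max (max a (neg a)) (max b (neg b)) := by
  have hM := hn.abs_nonneg a |>.trans (le_max_left _ (max b (neg b)))
  unfold symMax
  split_ifs
  · rw [hn.abs_zero]
    exact hM
  · rw [hn.abs_neg, hn.abs_of_nonneg hM]
  · rw [hn.abs_of_nonneg hM]

end SymMax

section SplitEval

variable {L : Type*} [LinearOrder L] {neg : L → L} {zero a : L} {s : Multiset L}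

theorem splitPos_eq_of_abs_le (hn : IsOrderNeg neg zero) (ha : a ∈ s) (h0 : zero ≤ a)
    (h : ∀ b ∈ s, max b (neg b) ≤ max a (neg a)) : splitPos zero s = a := by
  refine le_antisymm (splitPos_le_iff.2 ⟨h0, fun b hb hb0 => ?_⟩) (le_splitPos ha h0)
  simpa only [hn.abs_of_nonneg hb0, hn.abs_of_nonneg h0] using h b hb

theorem splitNeg_eq_of_abs_le (hn : IsOrderNeg neg zero) (ha : a ∈ s) (h0 : a ≤ zero)
    (h : ∀ b ∈ s, max b (neg b) ≤ max a (neg a)) : splitNeg zero s = a := by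
  refine le_antisymm ?_ (le_splitNeg_iff.2 ⟨h0, fun b hb hb0 => ?_⟩)
  · rcases h0.lt_or_eq with h0 | rfl
    · exact splitNeg_le ha h0
    · exact splitNeg_le_zero
  · refine (hn.le_iff_neg_le_neg a b).2 ?_
    simpa only [hn.abs_of_nonpos hb0.le, hn.abs_of_nonpos h0] using h b hb

theorem splitEval_eq_zero_of_neg_mem (hn : IsOrderNeg neg zero) (ha : a ∈ s) (hna : neg a ∈ s)
    (h : ∀ b ∈ s, max b (neg b) ≤ max a (neg a)) : splitEval neg zero s = zero := by
  have h' : ∀ b ∈ s, max b (neg b) ≤ max (neg a) (neg (neg a)) := fun b hb =>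
    (h b hb).trans_eq (hn.abs_neg a).symm
  rcases le_total zero a with h0 | h0
  · rw [splitEval_eq, splitPos_eq_of_abs_le hn ha h0 h,
      splitNeg_eq_of_abs_le hn hna (hn.neg_nonpos h0) h', symMax, if_pos rfl]
  · rw [splitEval_eq, splitPos_eq_of_abs_le hn hna (hn.neg_nonneg h0) h',
      splitNeg_eq_of_abs_le hn ha h0 h, symMax, if_pos (hn.neg_neg a).symm]

theorem splitEval_eq_of_abs_lt (hn : IsOrderNeg neg zero) (ha : a ∈ s)
    (h : ∀ b ∈ s, max b (neg b) < max a (neg a) ∨ b = a) : splitEval neg zero s = a := by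
  have hle : ∀ b ∈ s, max b (neg b) ≤ max a (neg a) := fun b hb =>
    (h b hb).elim le_of_lt fun hba => hba ▸ le_rfl
  rcases lt_trichotomy a zero with h0 | rfl | h0
  · have hP : splitPos zero s < neg a := by
      refine splitPos_lt_iff.2 ⟨hn.neg_pos h0, fun b hb hb0 => ?_⟩
      obtain hlt | rfl := h b hb
      · rwa [hn.abs_of_nonneg hb0, hn.abs_of_nonpos h0.le] at hlt
      · exact absurd h0 hb0.not_gt
    rw [splitEval_eq, splitNeg_eq_of_abs_le hn ha h0.le hle, symMax_of_abs_lt_right hn]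
    rwa [hn.abs_of_nonneg zero_le_splitPos, hn.abs_of_nonpos h0.le]
  · exact splitEval_eq_zero_of_neg_mem hn ha (hn.neg_zero.symm ▸ ha) hle
  · have hQ : neg a < splitNeg zero s := by
      refine lt_splitNeg_iff.2 ⟨hn.neg_neg_of_pos h0, fun b hb hb0 => ?_⟩
      obtain hlt | rfl := h b hb
      · rw [hn.abs_of_nonpos hb0.le, hn.abs_of_nonneg h0.le] at hlt
        exact hn.neg_lt_comm.2 hlt
      · exact absurd h0 hb0.not_gt
    rw [splitEval_eq, splitPos_eq_of_abs_le hn ha h0.le hle, symMax_of_abs_lt_left hn]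
    rw [hn.abs_of_nonpos splitNeg_le_zero, hn.abs_of_nonneg h0.le]
    exact hn.neg_lt_comm.1 hQ

theorem abs_splitEval_lt (hn : IsOrderNeg neg zero) {C : L} (hC : zero < C)
    (h : ∀ b ∈ s, max b (neg b) < C) :
    max (splitEval neg zero s) (neg (splitEval neg zero s)) < C := by
  have hP : splitPos zero s < C :=
    splitPos_lt_iff.2 ⟨hC, fun b hb hb0 => hn.abs_of_nonneg hb0 ▸ h b hb⟩
  have hQ : neg C < splitNeg zero s :=
    lt_splitNeg_iff.2 ⟨hn.neg_neg_of_pos hC,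
      fun b hb hb0 => hn.neg_lt_comm.2 (hn.abs_of_nonpos hb0.le ▸ h b hb)⟩
  rw [splitEval_eq]
  calc _ ≤ _ := abs_symMax_le hn _ _
    _ < C := by
      rw [hn.abs_of_nonneg zero_le_splitPos, hn.abs_of_nonpos splitNeg_le_zero]
      exact max_lt hP (hn.neg_lt_comm.1 hQ)

end SplitEval

theorem canonical_mobius_transform_properties_general {L : Type*} [LinearOrder L]
    (neg : L → L) (zero : L)
    (hinv : ∀ x, neg (neg x) = x)
    (hord : ∀ x y, x ≤ y ↔ neg y ≤ neg x)
    (hzero : neg zero = zero)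
    {X : Type*} [PartialOrder X]
    (hcov : ∀ x : X, {y | y ⋖ x}.Finite)
    (g f : X → L)
    (habs : ∀ y x : X, y ≤ x → max (g y) (neg (g y)) ≤ max (g x) (neg (g x)))
    (hf : ∀ x, f x = splitEval neg zero
      (g x ::ₘ (hcov x).toFinset.val.map (fun y => neg (g y)))) :
    ∀ x : X,
      ((∀ y, y ⋖ x → max (g y) (neg (g y)) < max (g x) (neg (g x)) ∨ g x = neg (g y)) →
        f x = g x) ∧
      ((∃ y, y ⋖ x ∧ g x = g y) → f x = zero) ∧
      (∀ y, y ≤ x → max (g y) (neg (g y)) < max (g x) (neg (g x)) →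
        max (f y) (neg (f y)) < max (g x) (neg (g x))) := by
  have hn : IsOrderNeg neg zero := ⟨hinv, hord, hzero⟩
  have mem (w : X) (b : L) : b ∈ g w ::ₘ (hcov w).toFinset.val.map (fun y => neg (g y)) ↔
      b = g w ∨ ∃ y, y ⋖ w ∧ neg (g y) = b := by
    simp
  have abs_term_le (w : X) (b : L)
      (hb : b ∈ g w ::ₘ (hcov w).toFinset.val.map (fun y => neg (g y))) :
      max b (neg b) ≤ max (g w) (neg (g w)) := by
    obtain rfl | ⟨y, hy, rfl⟩ := (mem w b).1 hb
    · exact le_rfl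
    · exact (hn.abs_neg _).trans_le (habs y w hy.le)
  intro x
  refine ⟨fun H => ?_, fun ⟨y, hy, hxy⟩ => ?_, fun y hyx hlt => ?_⟩
  · rw [hf x]
    refine splitEval_eq_of_abs_lt hn (Multiset.mem_cons_self _ _) fun b hb => ?_
    obtain rfl | ⟨y, hy, rfl⟩ := (mem x b).1 hb
    · exact Or.inr rfl
    · rw [hn.abs_neg]
      exact (H y hy).imp_right Eq.symm
  · rw [hf x]
    exact splitEval_eq_zero_of_neg_mem hn (Multiset.mem_cons_self _ _)
      ((mem x _).2 (Or.inr ⟨y, hy, hxy ▸ rfl⟩)) (abs_term_le x)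
  · rw [hf y]
    exact abs_splitEval_lt hn ((hn.abs_nonneg _).trans_lt hlt) fun b hb =>
      (abs_term_le y b hb).trans_lt hlt

/-- properties of the canonical Möbius transform
`f x = ⟨⊻ ({g x} + {−g y : y ⋖ x})⟩₋⁺` under the splitting rule, when `|g|`
is isotone.  Here `|x| = max x (neg x)`. -/
theorem canonical_mobius_transform_properties {L : Type*} [LinearOrder L]
    (neg : L → L) (zero : L)
    (hinv : ∀ x, neg (neg x) = x)
    (hord : ∀ x y, x ≤ y ↔ neg y ≤ neg x)
    (hzero : neg zero = zero)
    {X : Type*} [PartialOrder X]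
    (hfin : ∀ x : X, {y | y ≤ x}.Finite)
    (hcov : ∀ x : X, {y | y ⋖ x}.Finite)
    (g f : X → L)
    (habs : ∀ y x : X, y ≤ x → max (g y) (neg (g y)) ≤ max (g x) (neg (g x)))
    (hf : ∀ x, f x = splitEval neg zero
      (g x ::ₘ (hcov x).toFinset.val.map (fun y => neg (g y)))) :
    ∀ x : X,
      ((∀ y, y ⋖ x → max (g y) (neg (g y)) < max (g x) (neg (g x)) ∨ g x = neg (g y)) →
        f x = g x) ∧
      ((∃ y, y ⋖ x ∧ g x = g y) → f x = zero) ∧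
      (∀ y, y ≤ x → max (g y) (neg (g y)) < max (g x) (neg (g x)) →
        max (f y) (neg (f y)) < max (g x) (neg (g x))) :=
  canonical_mobius_transform_properties_general neg zero hinv hord hzero hcov g f habs hf
end

section
/- Solution set of the ordinal inversion equation for nonnegative isotone functions: let X be a finite poset with a least element, M a linear order with least element 0, and g : X → M isotone. Define m⋆ : X → M by m⋆(x) := g(x) if g(y) < g(x) for every y ⋖ x, and m⋆(x) := 0 otherwise. Then for every f : X → M: (max over {y : y ≤ x} of f(y)) = g(x) for all x ∈ X if and only if m⋆(x) ≤ f(x) ≤ g(x) for all x ∈ X. In particular the solutions form the interval [m⋆, g]. -/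
/-!
Write `F x` for the maximum of `f` below `x`. If `F = g`, then `f ≤ g`, and at a point `x` where
`g` strictly exceeds its values at all lower covers the maximum `F x` cannot be attained strictly
below `x` (such a point lies below some lower cover `z`, so `f y ≤ g z < g x`); hence `f x = g x`.
Conversely, if `f ≤ g` and `f x ≥ g x` at every such point, then `F ≤ g` by monotonicity of `g`,
and `g ≤ F` by well-founded induction: at any other point `x` some lower cover `y` has
`g x ≤ g y ≤ F y ≤ F x`.
-/

namespace OrdinalInversion

open Finset

variable {X M : Type*} [PartialOrder X] [Fintype X] [DecidableRel ((· ≤ ·) : X → X → Prop)]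
  [LinearOrder M] [OrderBot M]

lemma le_sup_filter_le {f : X → M} {x y : X} (hyx : y ≤ x) :
    f y ≤ (univ.filter (· ≤ x)).sup f :=
  le_sup (by simpa using hyx)

lemma sup_filter_le_mono (f : X → M) {x y : X} (hyx : y ≤ x) :
    (univ.filter (· ≤ y)).sup f ≤ (univ.filter (· ≤ x)).sup f :=
  sup_mono fun z hz ↦ by simpa using (mem_filter.mp hz).2.trans hyx

lemma apply_eq_of_sup_filter_le_eq {f g : X → M}
    (hf : ∀ x, (univ.filter (· ≤ x)).sup f = g x) {x : X} (hx : ∀ y, y ⋖ x → g y < g x) :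
    f x = g x := by
  obtain ⟨y, hy, hfy⟩ := exists_mem_eq_sup (univ.filter (· ≤ x)) ⟨x, by simp⟩ f
  rcases (mem_filter.mp hy).2.eq_or_lt with rfl | hyx
  · rw [← hf y, hfy]
  · obtain ⟨z, hyz, hzx⟩ := exists_le_covBy_of_lt hyx
    have hgz : g x ≤ g z := by
      rw [← hf x, hfy, ← hf z]
      exact le_sup_filter_le hyz
    exact absurd (hx z hzx) hgz.not_gt

lemma le_sup_filter_le_of_forall_covBy {f g : X → M}
    (hfg : ∀ x, (∀ y, y ⋖ x → g y < g x) → g x ≤ f x) (x : X) :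
    g x ≤ (univ.filter (· ≤ x)).sup f := by
  induction x using WellFoundedLT.induction with
  | ind x ih =>
    by_cases hx : ∀ y, y ⋖ x → g y < g x
    · exact (hfg x hx).trans (le_sup_filter_le le_rfl)
    · obtain ⟨y, hyx, hgy⟩ : ∃ y, y ⋖ x ∧ g x ≤ g y := by simpa using hx
      exact hgy.trans ((ih y hyx.lt).trans (sup_filter_le_mono f hyx.le))

theorem forall_sup_filter_le_eq_iff {g : X → M} (hg : Monotone g) (f : X → M) :
    (∀ x, (univ.filter (· ≤ x)).sup f = g x) ↔
      f ≤ g ∧ ∀ x, (∀ y, y ⋖ x → g y < g x) → g x ≤ f x := by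
  constructor
  · intro hf
    exact ⟨fun x ↦ hf x ▸ le_sup_filter_le le_rfl,
      fun x hx ↦ (apply_eq_of_sup_filter_le_eq hf hx).ge⟩
  · rintro ⟨hfg, hcov⟩ x
    refine le_antisymm (Finset.sup_le fun y hy ↦ ?_) (le_sup_filter_le_of_forall_covBy hcov x)
    exact (hfg y).trans (hg (mem_filter.mp hy).2)

end OrdinalInversion

theorem ordinal_inversion_solution_interval_general {X M : Type*}
    [PartialOrder X] [Fintype X]
    [DecidableRel ((· ≤ ·) : X → X → Prop)]
    [LinearOrder M] [OrderBot M]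
    (g : X → M) (hg : Monotone g)
    (mstar : X → M)
    (h1 : ∀ x, (∀ y, y ⋖ x → g y < g x) → mstar x = g x)
    (h2 : ∀ x, ¬ (∀ y, y ⋖ x → g y < g x) → mstar x = ⊥) :
    ∀ f : X → M,
      (∀ x, (Finset.univ.filter (fun y => y ≤ x)).sup f = g x) ↔
      (∀ x, mstar x ≤ f x ∧ f x ≤ g x) := by
  intro f
  rw [OrdinalInversion.forall_sup_filter_le_eq_iff hg f]
  constructor
  · rintro ⟨hfg, hcov⟩ x
    refine ⟨?_, hfg x⟩
    by_cases hx : ∀ y, y ⋖ x → g y < g x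
    · exact h1 x hx ▸ hcov x hx
    · exact h2 x hx ▸ bot_le
  · intro hf
    exact ⟨fun x ↦ (hf x).2, fun x hx ↦ h1 x hx ▸ (hf x).1⟩

/-- for a finite poset `X` with a least element, a linear order
`M` with least element `⊥` (playing the role of `0`), and an isotone
`g : X → M`, the solutions `f` of `(max_{y ≤ x} f y) = g x` are exactly the
functions in the interval `[m⋆, g]`, where `m⋆ x = g x` if `g y < g x` for
every `y ⋖ x` and `m⋆ x = ⊥` otherwise. -/
theorem ordinal_inversion_solution_interval {X M : Type*}
    [PartialOrder X] [Fintype X] [OrderBot X]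
    [DecidableRel ((· ≤ ·) : X → X → Prop)]
    [LinearOrder M] [OrderBot M]
    (g : X → M) (hg : Monotone g)
    (mstar : X → M)
    (h1 : ∀ x, (∀ y, y ⋖ x → g y < g x) → mstar x = g x)
    (h2 : ∀ x, ¬ (∀ y, y ⋖ x → g y < g x) → mstar x = ⊥) :
    ∀ f : X → M,
      (∀ x, (Finset.univ.filter (fun y => y ≤ x)).sup f = g x) ↔
      (∀ x, mstar x ≤ f x ∧ f x ≤ g x) :=
  ordinal_inversion_solution_interval_general g hg mstar h1 h2
end

section
/- The Möbius transform of a possibility (maxitive) measure is carried by the singletons: let N be a finite set, M a linear order with least element 0 and greatest element 1, and Π a map from subsets of N to M with Π(∅) = 0, Π(N) = 1, and Π(A ∪ B) = max(Π(A), Π(B)) for all A, B ⊆ N. Define the canonical Möbius transform m(A) := Π(A) if Π(A \ {j}) < Π(A) for every j ∈ A, and m(A) := 0 otherwise. Then m({i}) = Π({i}) for every i ∈ N, and m(A) = 0 for every A ⊆ N that is not a singleton. -/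
/-!
A set with two distinct points `j ≠ k` is the union of `A \ {j}` and `A \ {k}`, so maxitivity
forces `Π A` to be attained on one of these lower covers; hence no set with two or more elements
can be strictly above all of its lower covers. The empty set carries the mass `Π ∅ = 0`, and a
singleton `{i}` carries `Π {i}`, whether or not `0 < Π {i}`.
-/

namespace Finset

variable {α : Type*} [DecidableEq α]

theorem erase_union_erase_of_ne {s : Finset α} {a b : α} (hab : a ≠ b) :
    s.erase a ∪ s.erase b = s := by
  ext x
  simp only [mem_union, mem_erase]
  constructor
  · rintro (⟨-, hx⟩ | ⟨-, hx⟩) <;> exact hx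
  · intro hx
    by_cases hxa : x = a
    · exact .inr ⟨hxa ▸ hab, hx⟩
    · exact .inl ⟨hxa, hx⟩

theorem Nontrivial.exists_erase_eq_of_maxitive {M : Type*} [LinearOrder M] {f : Finset α → M}
    (hmax : ∀ A B, f (A ∪ B) = max (f A) (f B)) {A : Finset α} (hA : A.Nontrivial) :
    ∃ j ∈ A, f (A.erase j) = f A := by
  obtain ⟨j, hj, k, hk, hjk⟩ := hA
  have hcover : f A = max (f (A.erase j)) (f (A.erase k)) := by
    rw [← hmax, erase_union_erase_of_ne hjk]
  rcases max_choice (f (A.erase j)) (f (A.erase k)) with h | h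
  · exact ⟨j, hj, by rw [hcover, h]⟩
  · exact ⟨k, hk, by rw [hcover, h]⟩

end Finset

theorem mobius_transform_of_possibility_measure_general {N M : Type*}
    [DecidableEq N] [LinearOrder M] [BoundedOrder M]
    (Pi : Finset N → M)
    (h0 : Pi ∅ = ⊥)
    (hmax : ∀ A B : Finset N, Pi (A ∪ B) = max (Pi A) (Pi B))
    (m : Finset N → M)
    (hm1 : ∀ A : Finset N, (∀ j ∈ A, Pi (A.erase j) < Pi A) → m A = Pi A)
    (hm2 : ∀ A : Finset N, ¬ (∀ j ∈ A, Pi (A.erase j) < Pi A) → m A = ⊥) :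
    (∀ i : N, m {i} = Pi {i}) ∧
    (∀ A : Finset N, (∀ i : N, A ≠ {i}) → m A = ⊥) := by
  refine ⟨fun i => ?_, fun A hA => ?_⟩
  · by_cases hpos : ⊥ < Pi {i}
    · exact hm1 _ (by simpa [h0] using hpos)
    · rw [not_bot_lt_iff] at hpos
      rw [hm2 _ (by simp [hpos]), hpos]
  · rcases A.eq_empty_or_nonempty with rfl | hne
    · rw [hm1 _ (by simp), h0]
    · have hA : A.Nontrivial :=
        hne.exists_eq_singleton_or_nontrivial.resolve_left fun ⟨i, hi⟩ => hA i hi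
      obtain ⟨j, hj, heq⟩ := hA.exists_erase_eq_of_maxitive hmax
      exact hm2 _ fun hlt => (hlt j hj).ne heq

/-- the canonical Möbius transform of a possibility (maxitive)
measure is carried by the singletons: `m {i} = Π {i}` for every `i`, and
`m A = ⊥` for every non-singleton `A`. -/
theorem mobius_transform_of_possibility_measure {N M : Type*}
    [Fintype N] [DecidableEq N] [LinearOrder M] [BoundedOrder M]
    (Pi : Finset N → M)
    (h0 : Pi ∅ = ⊥) (h1 : Pi Finset.univ = ⊤)
    (hmax : ∀ A B : Finset N, Pi (A ∪ B) = max (Pi A) (Pi B))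
    (m : Finset N → M)
    (hm1 : ∀ A : Finset N, (∀ j ∈ A, Pi (A.erase j) < Pi A) → m A = Pi A)
    (hm2 : ∀ A : Finset N, ¬ (∀ j ∈ A, Pi (A.erase j) < Pi A) → m A = ⊥) :
    (∀ i : N, m {i} = Pi {i}) ∧
    (∀ A : Finset N, (∀ i : N, A ≠ {i}) → m A = ⊥) :=
  mobius_transform_of_possibility_measure_general Pi h0 hmax m hm1 hm2
end

section
/- The Möbius transform of a necessity measure is carried by a chain of upper sets: let N = {0, 1, …, n−1} (n ≥ 1), M a linear order with least element 0 and greatest element 1, equipped with a conjugation c : M → M (an order-reversing involution, hence c(0) = 1 and c(1) = 0). Let Π be a possibility measure on subsets of N (Π(∅) = 0, Π(N) = 1, Π(A ∪ B) = max(Π(A), Π(B))) whose singleton values are strictly ordered: 0 < Π({0}) < Π({1}) < ⋯ < Π({n−1}) = 1. Define the conjugate necessity measure Nec(A) := c(Π(N \ A)), and its canonical Möbius transform m(A) := Nec(A) if Nec(A \ {j}) < Nec(A) for every j ∈ A, and m(A) := 0 otherwise. Then m(A) = Nec(A) = c(Π({0, …, k−1})) whenever A = {j : j ≥ k} for some k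 ∈ {0, …, n} (in particular m(N) = 1 and m(∅) = 0), and m(A) = 0 for every other subset A. -/
/-! Since `Π` is maxitive and `c` reverses order, `Nec (A \ {j}) < Nec A` says
`Π Aᶜ < Π {j}`, and because the singleton values are strictly increasing (and above `Π ∅`)
this holds exactly when `j` exceeds every element of `Aᶜ`. So the Möbius transform is
nonzero precisely on the upper sets `{j : k ≤ j}` of `N`. -/

namespace Finset

variable {α M : Type*} [LinearOrder M] [DecidableEq α] {Pi : Finset α → M}

theorem monotone_of_map_union_eq_max (hmax : ∀ A B, Pi (A ∪ B) = max (Pi A) (Pi B)) :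
    Monotone Pi := fun A B hAB => by
  rw [← union_eq_right.mpr hAB, hmax]
  exact le_max_left _ _

theorem lt_map_insert_iff (hmax : ∀ A B, Pi (A ∪ B) = max (Pi A) (Pi B))
    (s : Finset α) (j : α) :
    Pi s < Pi (insert j s) ↔ Pi s < Pi {j} := by
  rw [insert_eq, hmax, lt_max_iff, lt_self_iff_false, or_false]

theorem map_lt_of_forall_map_singleton_lt (hmax : ∀ A B, Pi (A ∪ B) = max (Pi A) (Pi B))
    {b : M} (hempty : Pi ∅ < b) {s : Finset α} (hs : ∀ i ∈ s, Pi {i} < b) : Pi s < b := by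
  induction s using Finset.induction_on with
  | empty => exact hempty
  | insert a s _ ih =>
    rw [insert_eq, hmax]
    exact max_lt (hs a (mem_insert_self a s)) (ih fun i hi => hs i (mem_insert_of_mem hi))

variable [LinearOrder α]

theorem lt_map_insert_iff_forall_lt (hmax : ∀ A B, Pi (A ∪ B) = max (Pi A) (Pi B))
    (hsingle : StrictMono fun i => Pi {i}) (hempty : ∀ j, Pi ∅ < Pi {j})
    (s : Finset α) (j : α) :
    Pi s < Pi (insert j s) ↔ ∀ i ∈ s, i < j := by
  rw [lt_map_insert_iff hmax]
  refine ⟨fun hlt i hi => ?_, fun hs => ?_⟩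
  · by_contra! hji
    exact (hlt.trans_le ((hsingle.monotone hji).trans
      (monotone_of_map_union_eq_max hmax (singleton_subset_iff.mpr hi)))).false
  · exact map_lt_of_forall_map_singleton_lt hmax (hempty j) fun i hi => hsingle (hs i hi)

variable [Fintype α]

theorem conj_map_compl_erase_lt_iff {c : M → M} (hc_ord : ∀ x y, x ≤ y ↔ c y ≤ c x)
    (hmax : ∀ A B, Pi (A ∪ B) = max (Pi A) (Pi B))
    (hsingle : StrictMono fun i => Pi {i}) (hempty : ∀ j, Pi ∅ < Pi {j})
    (A : Finset α) (j : α) :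
    c (Pi (A.erase j)ᶜ) < c (Pi Aᶜ) ↔ ∀ i ∉ A, i < j := by
  rw [compl_erase, ← lt_iff_lt_of_le_iff_le (hc_ord _ _),
    lt_map_insert_iff_forall_lt hmax hsingle hempty]
  simp only [mem_compl]

end Finset

theorem Fin.forall_mem_forall_notMem_lt_iff {n : ℕ} (A : Finset (Fin n)) :
    (∀ j ∈ A, ∀ i ∉ A, i < j) ↔
      ∃ k ≤ n, A = Finset.univ.filter (fun j : Fin n => k ≤ j.val) := by
  constructor
  · intro hcut
    rcases A.eq_empty_or_nonempty with rfl | hne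
    · exact ⟨n, le_rfl, by ext i; simp [i.isLt]⟩
    · refine ⟨A.min' hne, (A.min' hne).isLt.le, ?_⟩
      ext i
      simp only [Finset.mem_filter, Finset.mem_univ, true_and, Fin.val_fin_le]
      refine ⟨A.min'_le i, fun hle => ?_⟩
      by_contra hi
      exact (hcut _ (A.min'_mem hne) i hi).not_ge hle
  · rintro ⟨k, -, rfl⟩ j hj i hi
    simp only [Finset.mem_filter, Finset.mem_univ, true_and, not_le] at hj hi
    exact Fin.lt_def.mpr (hi.trans_le hj)

/-- the canonical Möbius transform of the necessity measure
`Nec A = c (Π Aᶜ)` conjugate to a possibility measure `Π` with strictly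
ordered singleton values is carried by the chain of upper sets
`{j : k ≤ j}`, `k = 0, …, n`, where it takes the value
`c (Π {0, …, k−1})`, and vanishes elsewhere. -/
theorem mobius_transform_of_necessity_measure {M : Type*}
    [LinearOrder M] [BoundedOrder M]
    (c : M → M)
    (hc_ord : ∀ x y, x ≤ y ↔ c y ≤ c x)
    (n : ℕ) (hn : 1 ≤ n)
    (Pi : Finset (Fin n) → M)
    (h0 : Pi ∅ = ⊥)
    (hmax : ∀ A B : Finset (Fin n), Pi (A ∪ B) = max (Pi A) (Pi B))
    (hstrict : ∀ i j : Fin n, i < j → Pi {i} < Pi {j})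
    (hpos : ⊥ < Pi {(⟨0, hn⟩ : Fin n)})
    (Nec : Finset (Fin n) → M)
    (hNec : ∀ A : Finset (Fin n), Nec A = c (Pi Aᶜ))
    (m : Finset (Fin n) → M)
    (hm1 : ∀ A : Finset (Fin n), (∀ j ∈ A, Nec (A.erase j) < Nec A) → m A = Nec A)
    (hm2 : ∀ A : Finset (Fin n), ¬ (∀ j ∈ A, Nec (A.erase j) < Nec A) → m A = ⊥) :
    (∀ k : ℕ, k ≤ n →
      m (Finset.univ.filter (fun j : Fin n => k ≤ j.val)) =
        Nec (Finset.univ.filter (fun j : Fin n => k ≤ j.val)) ∧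
      Nec (Finset.univ.filter (fun j : Fin n => k ≤ j.val)) =
        c (Pi (Finset.univ.filter (fun j : Fin n => j.val < k)))) ∧
    (∀ A : Finset (Fin n),
      (∀ k : ℕ, k ≤ n → A ≠ Finset.univ.filter (fun j : Fin n => k ≤ j.val)) →
      m A = ⊥) := by
  have hsingle : StrictMono fun i => Pi {i} := fun i j => hstrict i j
  have hempty (j : Fin n) : Pi ∅ < Pi {j} :=
    h0 ▸ hpos.trans_le (hsingle.monotone (Nat.zero_le j.val))
  have hcut (A : Finset (Fin n)) : (∀ j ∈ A, Nec (A.erase j) < Nec A) ↔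
      ∃ k ≤ n, A = Finset.univ.filter (fun j : Fin n => k ≤ j.val) := by
    simp only [hNec, Finset.conj_map_compl_erase_lt_iff hc_ord hmax hsingle hempty]
    exact Fin.forall_mem_forall_notMem_lt_iff A
  refine ⟨fun k hk => ⟨hm1 _ ((hcut _).mpr ⟨k, hk, rfl⟩), ?_⟩,
    fun A hA => hm2 A fun hA' => ?_⟩
  · simp only [hNec, Finset.compl_filter, not_le]
  · obtain ⟨k, hk, rfl⟩ := (hcut A).mp hA'
    exact hA k hk rfl
end
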